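/- arXiv:2405.02521 — 7 statements merged into one kernel-verified Lean document; each statement's English description precedes it below -/
import Mathlib

section
/- For all β, a, t ∈ ℝ, the squared modulus of the horocyclic geodesic satisfies |γ_{β,a}(t)|² = 1 − 4/(e^{−t} + 2 + (1+a²)e^{t}); in particular |γ_{β,a}(t)| < 1 for all t. -/
noncomputable section

/-- `x̂(t) = tanh(t/2)`. -/
def xhat (t : ℝ) : ℝ := Real.tanh (t / 2)

/-- Horocyclic parameterization of hyperbolic geodesics in the Poincaré disk. -/
def γH (β a t : ℝ) : ℂ :=
  Complex.exp (Complex.I * (β : ℂ)) *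
    (((2 + Complex.I * (a : ℂ)) * (xhat t : ℂ) + Complex.I * (a : ℂ)) /
      (Complex.I * (a : ℂ) * (xhat t : ℂ) - 2 + Complex.I * (a : ℂ)))

/-!
The rotation `e^{iβ}` does not change the modulus, and for real `x` the Möbius factor has
`|·|² = (4x² + a²(x+1)²) / (4 + a²(x+1)²)`. Substituting `x = tanh(t/2) = (eᵗ-1)/(eᵗ+1)`
and clearing denominators gives `1 - 4eᵗ / ((eᵗ+1)² + a²e²ᵗ)`, which is the claimed formula
after dividing by `eᵗ`. The strict bound follows since the subtracted term is positive.
-/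

lemma Real.tanh_half_eq (t : ℝ) : Real.tanh (t / 2) = (Real.exp t - 1) / (Real.exp t + 1) := by
  have hsq : Real.exp (t / 2) * Real.exp (t / 2) = Real.exp t := by
    rw [← Real.exp_add, add_halves]
  have hpos : 0 < Real.exp (t / 2) := Real.exp_pos _
  rw [Real.tanh_eq, Real.exp_neg, ← hsq]
  field_simp

lemma normSq_horocyclic_numerator (a x : ℝ) :
    Complex.normSq ((2 + Complex.I * a) * x + Complex.I * a) = 4 * x ^ 2 + a ^ 2 * (x + 1) ^ 2 := by
  have h : (2 + Complex.I * a) * x + Complex.I * a = ↑(2 * x) + ↑(a * (x + 1)) * Complex.I := by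
    push_cast
    ring
  rw [h, Complex.normSq_add_mul_I]
  ring

lemma normSq_horocyclic_denominator (a x : ℝ) :
    Complex.normSq (Complex.I * a * x - 2 + Complex.I * a) = 4 + a ^ 2 * (x + 1) ^ 2 := by
  have h : Complex.I * a * x - 2 + Complex.I * a = ↑(-2 : ℝ) + ↑(a * (x + 1)) * Complex.I := by
    push_cast
    ring
  rw [h, Complex.normSq_add_mul_I]
  ring

lemma norm_γH_sq (β a t : ℝ) :
    ‖γH β a t‖ ^ 2 = (4 * xhat t ^ 2 + a ^ 2 * (xhat t + 1) ^ 2) / (4 + a ^ 2 * (xhat t + 1) ^ 2) := by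
  rw [γH, norm_mul, mul_comm Complex.I, Complex.norm_exp_ofReal_mul_I, one_mul, norm_div, div_pow,
    Complex.sq_norm, Complex.sq_norm, normSq_horocyclic_numerator, normSq_horocyclic_denominator]

lemma horocyclic_ratio_of_exp {a E : ℝ} (hE : 0 < E) :
    (4 * ((E - 1) / (E + 1)) ^ 2 + a ^ 2 * ((E - 1) / (E + 1) + 1) ^ 2) /
        (4 + a ^ 2 * ((E - 1) / (E + 1) + 1) ^ 2) =
      1 - 4 / (E⁻¹ + 2 + (1 + a ^ 2) * E) := by
  have hE1 : E + 1 ≠ 0 := by positivity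
  have hden : 4 + a ^ 2 * ((E - 1) / (E + 1) + 1) ^ 2 ≠ 0 := by positivity
  have hD : E⁻¹ + 2 + (1 + a ^ 2) * E ≠ 0 := by positivity
  field_simp
  ring

/-- `|γ_{β,a}(t)|² = 1 − 4/(e^{−t} + 2 + (1+a²)e^{t})`; in particular `|γ_{β,a}(t)| < 1`. -/
theorem horocyclic_modulus_sq (β a t : ℝ) :
    ‖γH β a t‖ ^ 2 =
      1 - 4 / (Real.exp (-t) + 2 + (1 + a ^ 2) * Real.exp t) ∧
    ‖γH β a t‖ < 1 := by
  have hsq : ‖γH β a t‖ ^ 2 = 1 - 4 / (Real.exp (-t) + 2 + (1 + a ^ 2) * Real.exp t) := by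
    rw [norm_γH_sq, xhat, Real.tanh_half_eq, Real.exp_neg, horocyclic_ratio_of_exp (Real.exp_pos t)]
  refine ⟨hsq, ?_⟩
  have hgap : 0 < 4 / (Real.exp (-t) + 2 + (1 + a ^ 2) * Real.exp t) := by positivity
  exact (sq_lt_one_iff₀ (norm_nonneg _)).mp (by linarith)
end
end

section
/- For all β, a, t ∈ ℝ one has x(γ_{β,a}(t)) = μ_h(a)/cosh(t − log μ_h(a)), i.e. x(γ_{β,a}(t)) = (1+a²)^{−1/2}/cosh(t + log √(1+a²)). -/
noncomputable section

/-- The distinguished boundary defining function `x(z) = (1−|z|²)/(1+|z|²)`. -/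
def xb (z : ℂ) : ℝ := (1 - ‖z‖ ^ 2) / (1 + ‖z‖ ^ 2)

/-- `μ_h(a) = (1+a²)^{−1/2}`. -/
def μh (a : ℝ) : ℝ := (1 + a ^ 2) ^ (-(1 : ℝ) / 2)

lemma xb_mul_of_norm_eq_one {u : ℂ} (hu : ‖u‖ = 1) (z : ℂ) : xb (u * z) = xb z := by
  simp only [xb, norm_mul, hu, one_mul]

lemma xb_div (p : ℂ) {q : ℂ} (hq : q ≠ 0) :
    xb (p / q) = (‖q‖ ^ 2 - ‖p‖ ^ 2) / (‖q‖ ^ 2 + ‖p‖ ^ 2) := by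
  have hq2 : ‖q‖ ^ 2 ≠ 0 := by positivity
  rw [xb, norm_div, div_pow]
  field_simp

lemma xb_γH_eq_xhat (β a t : ℝ) :
    xb (γH β a t) = (4 - 4 * xhat t ^ 2) / (4 + 4 * xhat t ^ 2 + 2 * a ^ 2 * (1 + xhat t) ^ 2) := by
  set s := xhat t
  have hp : (2 + Complex.I * a) * s + Complex.I * a = ↑(2 * s) + ↑(a * (1 + s)) * Complex.I := by
    push_cast; ring
  have hq : Complex.I * a * s - 2 + Complex.I * a = ↑(-2 : ℝ) + ↑(a * (1 + s)) * Complex.I := by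
    push_cast; ring
  have hq0 : ((-2 : ℝ) : ℂ) + ↑(a * (1 + s)) * Complex.I ≠ 0 := fun h => by
    simpa using congrArg Complex.re h
  rw [γH, xb_mul_of_norm_eq_one (by rw [mul_comm, Complex.norm_exp_ofReal_mul_I]), hp, hq,
    xb_div _ hq0, Complex.sq_norm, Complex.sq_norm, Complex.normSq_add_mul_I,
    Complex.normSq_add_mul_I]
  ring

lemma xb_γH (β a t : ℝ) :
    xb (γH β a t) = 2 / ((1 + a ^ 2) * Real.exp t + Real.exp (-t)) := by
  rw [xb_γH_eq_xhat, xhat, Real.tanh_half_eq, Real.exp_neg]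
  field_simp
  ring

lemma div_cosh_sub_log {μ : ℝ} (hμ : 0 < μ) (t : ℝ) :
    μ / Real.cosh (t - Real.log μ) = 2 / (μ⁻¹ ^ 2 * Real.exp t + Real.exp (-t)) := by
  rw [Real.cosh_eq, Real.exp_sub, neg_sub, Real.exp_sub, Real.exp_log hμ, Real.exp_neg]
  field_simp

lemma μh_eq_inv_sqrt (a : ℝ) : μh a = (√(1 + a ^ 2))⁻¹ := by
  rw [μh, Real.sqrt_eq_rpow, ← Real.rpow_neg (by positivity)]
  norm_num

lemma μh_pos (a : ℝ) : 0 < μh a := by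
  rw [μh_eq_inv_sqrt]; positivity

lemma inv_μh_sq (a : ℝ) : (μh a)⁻¹ ^ 2 = 1 + a ^ 2 := by
  rw [μh_eq_inv_sqrt, inv_inv, Real.sq_sqrt (by positivity)]

lemma log_μh (a : ℝ) : Real.log (μh a) = -Real.log √(1 + a ^ 2) := by
  rw [μh_eq_inv_sqrt, Real.log_inv]

/-- `x(γ_{β,a}(t)) = μ_h(a)/cosh(t − log μ_h(a))`, i.e.
`x(γ_{β,a}(t)) = (1+a²)^{−1/2}/cosh(t + log √(1+a²))`. -/
theorem xb_along_horocyclic (β a t : ℝ) :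
    xb (γH β a t) = μh a / Real.cosh (t - Real.log (μh a)) ∧
    xb (γH β a t) =
      (1 + a ^ 2) ^ (-(1 : ℝ) / 2) / Real.cosh (t + Real.log (Real.sqrt (1 + a ^ 2))) := by
  have h : xb (γH β a t) = μh a / Real.cosh (t - Real.log (μh a)) := by
    rw [xb_γH, div_cosh_sub_log (μh_pos a), inv_μh_sq]
  refine ⟨h, ?_⟩
  rw [h, log_μh, sub_neg_eq_add, μh]
end
end

section
/- For any a, β ∈ ℝ, setting t₀ := −log √(1+a²) and s := −a/(√(1+a²)+1) (so that s ∈ (−1,1)), one has γ_{β,a}(t + t₀) = γ^v_{β+π/2−2·arctan s, s}(t) for all t ∈ ℝ. -/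
noncomputable section

/-- Vertex parameterization of hyperbolic geodesics in the Poincaré disk. -/
def γv (ω s t : ℝ) : ℂ :=
  Complex.exp (Complex.I * (ω : ℂ)) *
    (((s : ℂ) + Complex.I * (xhat t : ℂ)) / (1 + Complex.I * (s : ℂ) * (xhat t : ℂ)))

/-! With `u = eᵗ` we have `x̂(t) = (u - 1)/(u + 1)` and `x̂(t - log r) = (u - r)/(u + r)`, so both
curves are Möbius transformations of `u`. Put `w = 1 + i s`. Since `s = tan (φ/2)` with `tan φ = -a`,
we get `(1 - s²) r = w w̄` and `(1 - s²)(1 ± i a) = w̄², w²`, while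
`e^{-2i arctan s} = w̄ / w`. Clearing the real factor `1 - s²` turns the horocyclic ratio
`(r - u(1 + i a))/(r + u(1 - i a))` into `w̄ (w - u w̄)/(w (w̄ + u w))`, which is the vertex ratio
rotated by `e^{i(π/2 - 2 arctan s)}`. -/

open Complex

lemma xhat_eq_exp (t : ℝ) : xhat t = (Real.exp t - 1) / (Real.exp t + 1) := by
  have h : Real.exp t = Real.exp (t / 2) ^ 2 := by rw [← Real.exp_nat_mul]; ring_nf
  rw [xhat, Real.tanh_eq, Real.exp_neg, h]
  field_simp

lemma xhat_add_neg_log {r : ℝ} (hr : 0 < r) (t : ℝ) :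
    xhat (t + -Real.log r) = (Real.exp t - r) / (Real.exp t + r) := by
  rw [xhat_eq_exp, Real.exp_add, Real.exp_neg, Real.exp_log hr]
  field_simp

lemma γH_add_neg_log (β a : ℝ) {r : ℝ} (hr : 0 < r) (t : ℝ) :
    γH β a (t + -Real.log r) =
      exp (I * β) * ((r - Real.exp t * (1 + I * a)) / (r + Real.exp t * (1 - I * a))) := by
  rw [γH, xhat_add_neg_log hr]
  have hE := Real.exp_pos t
  generalize Real.exp t = E at *
  have h₁ : (E : ℂ) + r ≠ 0 := by exact_mod_cast (by positivity : E + r ≠ 0)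
  have h₂ : (r : ℂ) + E * (1 - I * a) ≠ 0 := ne_zero_of_re_pos (by simp; positivity)
  have h₃ : ∀ x : ℝ, I * a * x - 2 + I * a ≠ 0 := fun x h => by simpa using congrArg re h
  congr 1
  rw [div_eq_div_iff (h₃ _) h₂]
  push_cast
  field_simp
  ring

lemma γv_eq_mobius_exp (ω s t : ℝ) :
    γv ω s t = exp (I * ω) *
      (I * ((Real.exp t * (1 - I * s) - (1 + I * s)) / (Real.exp t * (1 + I * s) + (1 - I * s)))) := by
  rw [γv, xhat_eq_exp]
  have hE := Real.exp_pos t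
  generalize Real.exp t = E at *
  have h₁ : (E : ℂ) + 1 ≠ 0 := by exact_mod_cast (by positivity : E + 1 ≠ 0)
  have h₂ : (E : ℂ) * (1 + I * s) + (1 - I * s) ≠ 0 := ne_zero_of_re_pos (by simp; positivity)
  have h₃ : ∀ x : ℝ, 1 + I * s * x ≠ 0 := fun x => ne_zero_of_re_pos (by simp)
  congr 1
  rw [← mul_div_assoc, div_eq_div_iff (h₃ _) h₂]
  push_cast
  field_simp
  ring_nf
  simp only [I_sq, I_pow_three]
  ring

lemma exp_neg_two_arctan_mul_I (s : ℝ) :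
    exp (-(2 * Real.arctan s) * I) = (1 - I * s) / (1 + I * s) := by
  have h₁ : (1 : ℂ) + s * I ≠ 0 := ne_zero_of_re_pos (by simp)
  have h₂ : (1 : ℂ) - s * I ≠ 0 := ne_zero_of_re_pos (by simp)
  have h : 2 * Complex.arctan s * I = log ((1 + s * I) / (1 - s * I)) := by
    rw [Complex.arctan]; ring_nf; simp
  rw [ofReal_arctan, neg_mul, exp_neg, h, exp_log (div_ne_zero h₁ h₂), inv_div,
    mul_comm I]

lemma exp_I_mul_vertex_angle (β s : ℝ) :
    exp (I * ↑(β + Real.pi / 2 - 2 * Real.arctan s)) =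
      exp (I * β) * (I * ((1 - I * s) / (1 + I * s))) := by
  rw [show I * ↑(β + Real.pi / 2 - 2 * Real.arctan s) =
      I * β + Real.pi / 2 * I + -(2 * Real.arctan s) * I by push_cast; ring,
    exp_add, exp_add, exp_pi_div_two_mul_I, exp_neg_two_arctan_mul_I, mul_assoc]

lemma half_tangent_identities {a r s : ℝ} (hr : r ^ 2 = 1 + a ^ 2) (hr₁ : r + 1 ≠ 0)
    (hs : s * (r + 1) = -a) :
    r * (1 - s ^ 2) = 1 + s ^ 2 ∧ a * (1 - s ^ 2) = -2 * s := by
  have hs₂ : s ^ 2 * (r + 1) = r - 1 := by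
    apply mul_right_cancel₀ hr₁
    linear_combination (s * (r + 1) - a) * hs - hr
  constructor
  · linear_combination -hs₂
  · linear_combination (1 - s ^ 2) * hs + s * hs₂

lemma neg_div_sqrt_one_add_sq_add_one_mem_Ioo (a : ℝ) :
    -a / (√(1 + a ^ 2) + 1) ∈ Set.Ioo (-1 : ℝ) 1 := by
  have hpos : 0 < √(1 + a ^ 2) + 1 := by positivity
  rw [Set.mem_Ioo, ← abs_lt, abs_div, abs_neg, abs_of_pos hpos, div_lt_one hpos]
  linarith [Real.abs_le_sqrt (by linarith : a ^ 2 ≤ 1 + a ^ 2)]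

lemma horocyclic_ratio_eq_vertex_ratio {a r s E : ℝ} (hr : 0 < r) (hE : 0 < E)
    (hrs : r * (1 - s ^ 2) = 1 + s ^ 2) (has : a * (1 - s ^ 2) = -2 * s) :
    (r - E * (1 + I * a)) / (r + E * (1 - I * a)) =
      I * ((1 - I * s) / (1 + I * s)) *
        (I * ((E * (1 - I * s) - (1 + I * s)) / (E * (1 + I * s) + (1 - I * s)))) := by
  have h₁ : (r : ℂ) + E * (1 - I * a) ≠ 0 := ne_zero_of_re_pos (by simp; positivity)
  have h₂ : (E : ℂ) * (1 + I * s) + (1 - I * s) ≠ 0 := ne_zero_of_re_pos (by simp; positivity)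
  have h₃ : 1 + I * s ≠ 0 := ne_zero_of_re_pos (by simp)
  have hrs' : (r : ℂ) * (1 - s ^ 2) = 1 + s ^ 2 := by exact_mod_cast hrs
  have has' : (a : ℂ) * (1 - s ^ 2) = -2 * s := by exact_mod_cast has
  field_simp
  ring_nf
  simp only [I_pow_eq_pow_mod', I_sq, I_pow_three]
  linear_combination (2 * E) * hrs' - 2 * E ^ 2 * I * has'

/-- Horocyclic-to-vertex reparameterization: with `t₀ = −log √(1+a²)` and
`s = −a/(√(1+a²)+1)` (which lies in `(−1,1)`), one has
`γ_{β,a}(t + t₀) = γ^v_{β+π/2−2·arctan s, s}(t)` for all `t`. -/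
theorem horocyclic_to_vertex (β a : ℝ) :
    -a / (Real.sqrt (1 + a ^ 2) + 1) ∈ Set.Ioo (-1 : ℝ) 1 ∧
    ∀ t : ℝ,
      γH β a (t + -Real.log (Real.sqrt (1 + a ^ 2))) =
        γv (β + Real.pi / 2 - 2 * Real.arctan (-a / (Real.sqrt (1 + a ^ 2) + 1)))
          (-a / (Real.sqrt (1 + a ^ 2) + 1)) t := by
  set r := √(1 + a ^ 2)
  have hr : 0 < r := by positivity
  obtain ⟨hrs, has⟩ := half_tangent_identities (Real.sq_sqrt (by positivity) : r ^ 2 = 1 + a ^ 2)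
    (by positivity) (div_mul_cancel₀ _ (by positivity))
  refine ⟨neg_div_sqrt_one_add_sq_add_one_mem_Ioo a, fun t => ?_⟩
  rw [γH_add_neg_log β a hr, γv_eq_mobius_exp, exp_I_mul_vertex_angle, mul_assoc,
    horocyclic_ratio_eq_vertex_ratio hr (Real.exp_pos t) hrs has]
end
end

section
/- Orientation reversal in horocyclic coordinates: for all β, a, t ∈ ℝ one has γ_{β+π+2·arctan a, −a}(t) = γ_{β,a}(2·log μ_h(a) − t). Consequently, for every continuous function f : ℂ → ℝ with compact support contained in the open unit disk, ∫_ℝ f(γ_{β+π+2·arctan a, −a}(t)) dt = ∫_ℝ f(γ_{β,a}(t)) dt, i.e. the hyperbolic X-ray transform I₀^H f(β,a) := ∫_ℝ f(γ_{β,a}(t)) dt satisfies I₀^H f ∘ S_A^H = I₀^H f where S_A^H(β,a) := (β+π+2·arctan a, −a). -/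
noncomputable section

/-!
In the variable `s = eᵗ` the geodesic is a Möbius expression:
`γ_{β,a}(t) = e^{iβ} ((1+ia)s − 1)/((ia−1)s − 1)`. Reversing the time to `2 log μ_h(a) − t`
replaces `s` by `1/((1+a²)s)`, and because `1 + a² = (1+ia)(1−ia)` this turns the expression
for `a` into `−(1+ia)/(1−ia) = e^{i(π + 2 arctan a)}` times the expression for `−a`.
The integral identity is then the invariance of Lebesgue measure under `t ↦ c − t`.
-/

open Complex

lemma one_sub_I_mul_ne_zero (a : ℝ) : 1 - I * a ≠ 0 :=
  ne_zero_of_re_pos (by simp)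

def horoMobius (a s : ℝ) : ℂ := ((1 + I * a) * s - 1) / ((I * a - 1) * s - 1)

lemma γH_eq_exp_mul_horoMobius (β a t : ℝ) :
    γH β a t = exp (I * β) * horoMobius a (Real.exp t) := by
  rw [γH, horoMobius, xhat_eq_exp]
  obtain ⟨s, hs, hst⟩ : ∃ s, 0 < s ∧ Real.exp t = s := ⟨_, Real.exp_pos t, rfl⟩
  rw [hst]
  have hs1 : (s : ℂ) + 1 ≠ 0 := by exact_mod_cast (by positivity : s + 1 ≠ 0)
  have hnum : (2 + I * a) * (((s - 1) / (s + 1) : ℝ) : ℂ) + I * a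
      = 2 * ((1 + I * a) * s - 1) / (s + 1) := by
    push_cast; field_simp; ring
  have hden : I * a * (((s - 1) / (s + 1) : ℝ) : ℂ) - 2 + I * a
      = 2 * ((I * a - 1) * s - 1) / (s + 1) := by
    push_cast; field_simp; ring
  rw [hnum, hden, div_div_div_cancel_right₀ hs1, mul_div_mul_left _ _ two_ne_zero]

lemma horoMobius_inv_div (a s : ℝ) (hs : 0 < s) :
    horoMobius a ((1 + a ^ 2)⁻¹ / s) = -((1 + I * a) / (1 - I * a)) * horoMobius (-a) s := by
  set x : ℝ := (1 + a ^ 2)⁻¹ / s with hx_def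
  have hx : (1 + I * a) * (1 - I * a) * s * x = 1 := by
    have : (1 + a ^ 2) * s * x = 1 := by rw [hx_def]; field_simp
    linear_combination (by exact_mod_cast this : ((1 + a ^ 2) * s * x : ℂ) = 1) -
      (a ^ 2 * s * x) * I_sq
  have hA : -(1 + I * a) * s - 1 ≠ 0 := fun h ↦ by
    have := congrArg re h
    simp only [sub_re, add_re, neg_re, mul_re, I_re, I_im, ofReal_re, ofReal_im, one_re,
      zero_re] at this
    linarith
  have hx' : -(1 - I * a) * x - 1 ≠ 0 := fun h ↦ by
    have hx_pos : 0 < x := by rw [hx_def]; positivity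
    have := congrArg re h
    simp only [sub_re, neg_re, mul_re, I_re, I_im, ofReal_re, ofReal_im, one_re,
      zero_re] at this
    linarith
  unfold horoMobius
  push_cast
  rw [show I * a - 1 = -(1 - I * a) by ring, show I * -a - 1 = -(1 + I * a) by ring,
    show 1 + I * -a = 1 - I * a by ring, eq_comm, neg_mul, div_mul_div_comm, ← neg_div,
    div_eq_div_iff (mul_ne_zero (one_sub_I_mul_ne_zero a) hA) hx']
  linear_combination ((1 + I * a) + (1 - I * a)) * hx

lemma exp_I_mul_two_arctan (a : ℝ) :
    exp (I * (2 * Real.arctan a : ℝ)) = (1 + I * a) / (1 - I * a) := by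
  have hpos : (0 : ℝ) < 1 + a ^ 2 := by positivity
  have hsq : ((√(1 + a ^ 2) : ℝ) : ℂ) ^ 2 = 1 + a ^ 2 := by
    exact_mod_cast Real.sq_sqrt hpos.le
  have hne : ((√(1 + a ^ 2) : ℝ) : ℂ) ≠ 0 := by exact_mod_cast (Real.sqrt_pos.2 hpos).ne'
  have h1 : exp (I * (Real.arctan a : ℝ)) = (1 + I * a) / (√(1 + a ^ 2) : ℝ) := by
    rw [mul_comm, exp_mul_I, ← ofReal_cos, ← ofReal_sin, Real.cos_arctan, Real.sin_arctan]
    push_cast; field_simp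
  rw [show I * ((2 * Real.arctan a : ℝ) : ℂ) = ((2 : ℕ) : ℂ) * (I * (Real.arctan a : ℝ)) by
    push_cast; ring, exp_nat_mul, h1, div_pow, hsq, div_eq_div_iff (by exact_mod_cast hpos.ne')
    (one_sub_I_mul_ne_zero a)]
  linear_combination (-(1 + I * a) * a ^ 2) * I_sq

lemma exp_two_mul_log_μh (a : ℝ) : Real.exp (2 * Real.log (μh a)) = (1 + a ^ 2)⁻¹ := by
  have hμ : 0 < μh a := Real.rpow_pos_of_pos (by positivity) _
  rw [mul_comm, Real.exp_mul, Real.exp_log hμ, μh, ← Real.rpow_mul (by positivity)]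
  norm_num [Real.rpow_neg_one]

lemma γH_orientation_reversal (β a t : ℝ) :
    γH (β + Real.pi + 2 * Real.arctan a) (-a) t = γH β a (2 * Real.log (μh a) - t) := by
  rw [γH_eq_exp_mul_horoMobius, γH_eq_exp_mul_horoMobius, Real.exp_sub, exp_two_mul_log_μh,
    horoMobius_inv_div _ _ (Real.exp_pos t), ← exp_I_mul_two_arctan, ← mul_assoc]
  congr 1
  push_cast
  rw [mul_add, mul_add, exp_add, exp_add, mul_comm I (Real.pi : ℂ), exp_pi_mul_I]
  ring

/-- Orientation reversal in horocyclic coordinates: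
`γ_{β+π+2·arctan a, −a}(t) = γ_{β,a}(2·log μ_h(a) − t)`, and consequently the hyperbolic
X-ray transform `I₀^H f(β,a) = ∫_ℝ f(γ_{β,a}(t)) dt` satisfies
`I₀^H f ∘ S_A^H = I₀^H f`, where `S_A^H(β,a) = (β+π+2·arctan a, −a)`, for every continuous
compactly supported `f` with support inside the open unit disk. -/
theorem horocyclic_orientation_reversal (β a : ℝ) :
    (∀ t : ℝ,
      γH (β + Real.pi + 2 * Real.arctan a) (-a) t = γH β a (2 * Real.log (μh a) - t)) ∧
    ∀ f : ℂ → ℝ, Continuous f → HasCompactSupport f → tsupport f ⊆ Metric.ball 0 1 →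
      (∫ t : ℝ, f (γH (β + Real.pi + 2 * Real.arctan a) (-a) t)) =
        ∫ t : ℝ, f (γH β a t) := by
  refine ⟨γH_orientation_reversal β a, fun f _ _ _ ↦ ?_⟩
  simp_rw [γH_orientation_reversal]
  exact MeasureTheory.integral_sub_left_eq_self (fun t ↦ f (γH β a t)) _ _
end
end

section
/- Footprint map formula: let z ∈ ℂ with |z| < 1 and θ ∈ ℝ, and set ζ := z·e^{−iθ}, β := θ + π + 2·arg(1 − ζ) (principal argument, well defined since Re(1−ζ) > 0), and a := 2·Im(ζ)/(1 − |z|²). Then the Möbius map T_{z,θ}(w) := (e^{iθ}·w + z)/(1 + e^{iθ}·conj(z)·w) satisfies T_{z,θ}(−1) = e^{iβ} and T_{z,θ}(1) = e^{i(β+π+2·arctan a)}; that is, the unit-speed hyperbolic geodesic t ↦ T_{z,θ}(x̂(t)) through (z,θ) has the same ideal endpoints as the horocyclically parameterized geodesic γ_{β,a}. -/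
noncomputable section

/-- The Möbius map `T_{z,θ}(w) = (e^{iθ}·w + z)/(1 + e^{iθ}·conj(z)·w)`. -/
def Tmob (z : ℂ) (θ : ℝ) (w : ℂ) : ℂ :=
  (Complex.exp (Complex.I * (θ : ℂ)) * w + z) /
    (1 + Complex.exp (Complex.I * (θ : ℂ)) * (starRingEnd ℂ) z * w)

/-! With `E = e^{iθ}` and `z = ζ E`, the Möbius map reads `T(w) = E (w + ζ) / (1 + conj ζ · w)`, so
`T(-1) = -E (1 - ζ) / conj (1 - ζ)` and `T(1) = E (1 + ζ) / conj (1 + ζ)`. Since `w / conj w = e^{2i arg w}`,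
the first value is `e^{iβ}`. For the second, `(1 + ζ) · conj (1 - ζ) = (1 - |ζ|²)(1 + i a)` is a positive
multiple of `1 + i a`, whose argument is `arctan a`; hence the phase `(1 + ζ) / conj (1 + ζ)` is that of
`1 - ζ` times `e^{2i arctan a}`. -/

open Complex ComplexConjugate

namespace Complex

theorem div_conj_eq_exp_two_arg_mul_I {w : ℂ} (hw : w ≠ 0) :
    w / conj w = exp (2 * arg w * I) := by
  have hpolar := norm_mul_exp_arg_mul_I w
  have hconj : conj w = ‖w‖ * exp (-(arg w * I)) := by
    conv_lhs => rw [← hpolar]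
    rw [map_mul, conj_ofReal, ← exp_conj, map_mul, conj_ofReal, conj_I]
    ring_nf
  have hr : (‖w‖ : ℂ) ≠ 0 := by simpa using hw
  rw [hconj]
  nth_rw 1 [← hpolar]
  rw [mul_div_mul_left _ _ hr, ← Complex.exp_sub]
  congr 1
  ring

theorem arg_one_add_mul_I (a : ℝ) : arg (1 + a * I) = Real.arctan a := by
  have hnorm : ‖(1 : ℂ) + a * I‖ = √(1 + a ^ 2) := by
    rw [norm_def, ← ofReal_one, normSq_add_mul_I, one_pow]
  rw [arg_of_re_nonneg (by simp), Real.arctan_eq_arcsin, hnorm]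
  simp

section UnitDisk

variable {ζ : ℂ}

theorem one_sub_ne_zero_of_norm_ne_one (hζ : ‖ζ‖ ≠ 1) : 1 - ζ ≠ 0 :=
  fun h => hζ (by simp [← sub_eq_zero.mp h])

theorem one_add_ne_zero_of_norm_ne_one (hζ : ‖ζ‖ ≠ 1) : 1 + ζ ≠ 0 :=
  fun h => hζ (by simp [eq_neg_of_add_eq_zero_right h])

theorem one_add_mul_conj_one_sub (hζ : ‖ζ‖ ≠ 1) :
    (1 + ζ) * conj (1 - ζ) = (1 - ‖ζ‖ ^ 2 : ℝ) * (1 + (2 * ζ.im / (1 - ‖ζ‖ ^ 2) : ℝ) * I) := by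
  have hc : 1 - ‖ζ‖ ^ 2 ≠ 0 := by
    rwa [sub_ne_zero, ne_comm, ne_eq, pow_eq_one_iff_of_nonneg (norm_nonneg ζ) two_ne_zero]
  rw [mul_add, mul_one, ← mul_assoc, ← ofReal_mul, mul_div_cancel₀ _ hc, Complex.sq_norm]
  apply Complex.ext <;> simp [normSq_apply] <;> ring

theorem one_add_div_conj_one_add (hζ : ‖ζ‖ < 1) :
    (1 + ζ) / conj (1 + ζ) =
      (1 - ζ) / conj (1 - ζ) * exp (2 * Real.arctan (2 * ζ.im / (1 - ‖ζ‖ ^ 2)) * I) := by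
  have hc : 0 < 1 - ‖ζ‖ ^ 2 := by nlinarith [norm_nonneg ζ]
  have hsub := one_sub_ne_zero_of_norm_ne_one hζ.ne
  have hadd := one_add_ne_zero_of_norm_ne_one hζ.ne
  have hsub_conj := (map_ne_zero conj).mpr hsub
  have hadd_conj := (map_ne_zero conj).mpr hadd
  have hp := one_add_mul_conj_one_sub hζ.ne
  have hphase := div_conj_eq_exp_two_arg_mul_I (mul_ne_zero hadd hsub_conj)
  rw [hp, arg_real_mul _ hc, arg_one_add_mul_I, ← hp] at hphase
  rw [← hphase, map_mul, conj_conj]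
  field_simp

end UnitDisk

end Complex

theorem Tmob_mul_exp (ζ : ℂ) (θ : ℝ) (w : ℂ) :
    Tmob (ζ * exp (I * θ)) θ w = exp (I * θ) * ((w + ζ) / (1 + conj ζ * w)) := by
  have hunit : exp (I * θ) * conj (exp (I * θ)) = 1 := by
    rw [← exp_conj, ← Complex.exp_add]; simp
  rw [Tmob, map_mul, mul_div_assoc']
  congr 1
  · ring
  · linear_combination (conj ζ * w) * hunit

/-- Footprint map formula: for `|z| < 1`, `θ ∈ ℝ`, with `ζ = z·e^{−iθ}`,
`β = θ + π + 2·arg(1 − ζ)`, and `a = 2·Im(ζ)/(1 − |z|²)`, the Möbius map `T_{z,θ}`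
satisfies `T_{z,θ}(−1) = e^{iβ}` and `T_{z,θ}(1) = e^{i(β+π+2·arctan a)}`; that is,
the geodesic `t ↦ T_{z,θ}(x̂(t))` through `(z,θ)` has the same ideal endpoints as the
horocyclically parameterized geodesic `γ_{β,a}`. -/
theorem footprint_map_formula (z : ℂ) (hz : ‖z‖ < 1) (θ : ℝ)
    (ζ : ℂ) (hζ : ζ = z * Complex.exp (-Complex.I * (θ : ℂ)))
    (β : ℝ) (hβ : β = θ + Real.pi + 2 * Complex.arg (1 - ζ))
    (a : ℝ) (ha : a = 2 * ζ.im / (1 - ‖z‖ ^ 2)) :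
    Tmob z θ (-1) = Complex.exp (Complex.I * (β : ℂ)) ∧
    Tmob z θ 1 = Complex.exp (Complex.I * ((β + Real.pi + 2 * Real.arctan a : ℝ) : ℂ)) := by
  have hz_eq : z = ζ * exp (I * θ) := by
    rw [hζ, mul_assoc, ← Complex.exp_add]; simp
  have hnorm : ‖ζ‖ = ‖z‖ := by
    rw [hζ, norm_mul, norm_exp]; simp
  have hζ1 : ‖ζ‖ < 1 := hnorm ▸ hz
  have hexpβ : exp (I * β) = -(exp (I * θ) * ((1 - ζ) / conj (1 - ζ))) := by
    rw [div_conj_eq_exp_two_arg_mul_I (one_sub_ne_zero_of_norm_ne_one hζ1.ne), neg_eq_neg_one_mul,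
      ← exp_pi_mul_I, ← Complex.exp_add, ← Complex.exp_add, hβ]
    congr 1
    push_cast
    ring
  constructor
  · rw [hz_eq, Tmob_mul_exp, hexpβ, map_sub, map_one]
    ring
  · have hphase := one_add_div_conj_one_add hζ1
    rw [hnorm, ← ha] at hphase
    have hconj : 1 + conj ζ * 1 = conj (1 + ζ) := by simp
    rw [hz_eq, Tmob_mul_exp, hconj, hphase, ofReal_add, ofReal_add, ofReal_mul, ofReal_ofNat,
      show I * (β + Real.pi + 2 * Real.arctan a) = I * β + Real.pi * I + 2 * Real.arctan a * I by
        ring,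
      Complex.exp_add, Complex.exp_add, exp_pi_mul_I, hexpβ]
    ring
end
end

section
/- Santaló's formula in horocyclic coordinates: for every continuous function f : ℂ × ℂ → ℝ whose support is contained in K × ℂ for some compact K inside the open unit disk, ∫₀^{2π} ∫_ℝ ∫_ℝ f(γ_{β,a}(t), γ′_{β,a}(t)) dt da dβ = ∫_{|z|<1} (2/(1−|z|²))² · ( ∫₀^{2π} f(z, ((1−|z|²)/2)·e^{iθ}) dθ ) dλ(z), where γ′_{β,a}(t) is the complex derivative in t and dλ is Lebesgue measure on ℂ ≅ ℝ². -/
/-!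
For fixed `β`, `a + t i ↦ γ_{β,a}(t)` is the Cayley transform of the half-plane point
`e^{-t} - a i`, rotated by `e^{iβ}`: a diffeomorphism of `ℂ` onto the disk whose inverse Jacobian
at `z` is `(2 / (1 - |z|²))² P(β, z)`, with `P` the Poisson kernel, and along which `γ'` is a
vector field `v_β(z)` of hyperbolic length one. After Fubini, for fixed `z` one writes
`v_β(z) = c(z) e^{iθ(β)}` with `θ(β) = β + π + 2 arg (1 - e^{-iβ} z)`; then `dθ/dβ = P(β, z)` and
`θ` winds once around the circle while `β` does, so the `β`-integral becomes the `θ`-integral.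
-/

open MeasureTheory

noncomputable section

open Complex ComplexConjugate
open scoped Real

namespace Horocyclic

def toHalfPlane (w : ℂ) : ℂ := ((Real.exp (-w.im) : ℝ) : ℂ) - w.re * I

def ofHalfPlane (ζ : ℂ) : ℂ := -ζ.im - Real.log ζ.re * I

@[simp] lemma toHalfPlane_re (w : ℂ) : (toHalfPlane w).re = Real.exp (-w.im) := by
  simp [toHalfPlane, -Complex.ofReal_exp]

@[simp] lemma toHalfPlane_im (w : ℂ) : (toHalfPlane w).im = -w.re := by
  simp [toHalfPlane, -Complex.ofReal_exp]

lemma toHalfPlane_add_one_ne_zero (w : ℂ) : toHalfPlane w + 1 ≠ 0 := by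
  intro h
  have := congrArg re h
  simp only [add_re, toHalfPlane_re, one_re, zero_re] at this
  linarith [Real.exp_pos (-w.im)]

lemma ofHalfPlane_toHalfPlane (w : ℂ) : ofHalfPlane (toHalfPlane w) = w := by
  apply Complex.ext <;> simp [ofHalfPlane]

lemma toHalfPlane_ofHalfPlane {ζ : ℂ} (hζ : 0 < ζ.re) : toHalfPlane (ofHalfPlane ζ) = ζ := by
  apply Complex.ext <;> simp [ofHalfPlane, Real.exp_log hζ]

def toHalfPlaneDeriv (w : ℂ) : ℂ →L[ℝ] ℂ :=
  ofRealCLM ∘L (Real.exp (-w.im) • -imCLM) - reCLM.smulRight I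

lemma hasFDerivAt_toHalfPlane (w : ℂ) : HasFDerivAt toHalfPlane (toHalfPlaneDeriv w) w := by
  have hexp : HasFDerivAt (fun v : ℂ => Real.exp (-v.im)) (Real.exp (-w.im) • -imCLM) w :=
    (Real.hasDerivAt_exp _).comp_hasFDerivAt w imCLM.hasFDerivAt.neg
  refine ((ofRealCLM.hasFDerivAt.comp w hexp).sub (reCLM.smulRight I).hasFDerivAt
    ).congr_of_eventuallyEq (.of_forall fun v => ?_)
  simp [toHalfPlane, -Complex.ofReal_exp]

def horoChart (β : ℝ) (w : ℂ) : ℂ :=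
  exp (I * β) * ((toHalfPlane w - 1) / (toHalfPlane w + 1))

lemma xhat_eq_div (t : ℝ) : xhat t = (1 - Real.exp (-t)) / (1 + Real.exp (-t)) := by
  have h : Real.exp (-t) = Real.exp (-(t / 2)) * Real.exp (-(t / 2)) := by
    rw [← Real.exp_add]; ring_nf
  rw [xhat, Real.tanh_eq_sinh_div_cosh, Real.sinh_eq, Real.cosh_eq, h]
  have := Real.exp_pos (t / 2)
  rw [Real.exp_neg]
  field_simp

lemma γH_eq_horoChart (β a t : ℝ) : γH β a t = horoChart β (a + t * I) := by
  obtain ⟨s, hs, hx, hζ⟩ : ∃ s : ℝ, 0 < s ∧ xhat t = (1 - s) / (1 + s) ∧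
      toHalfPlane (a + t * I) = s - a * I :=
    ⟨_, Real.exp_pos (-t), xhat_eq_div t, by simp [toHalfPlane, -Complex.ofReal_exp]⟩
  have hγ : I * a * (xhat t : ℂ) - 2 + I * a ≠ 0 := fun h => by simpa using congrArg re h
  have hζ1 : (s : ℂ) - a * I + 1 ≠ 0 := hζ ▸ toHalfPlane_add_one_ne_zero (a + t * I)
  have hs1 : (1 + s : ℂ) ≠ 0 := by exact_mod_cast (by linarith : 1 + s ≠ 0)
  rw [γH, horoChart, hζ]
  congr 1
  rw [div_eq_div_iff hγ hζ1, hx]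
  push_cast
  field_simp
  ring

lemma hasDerivAt_rotCayley (β : ℝ) {ζ : ℂ} (hζ : ζ + 1 ≠ 0) :
    HasDerivAt (fun ζ => exp (I * β) * ((ζ - 1) / (ζ + 1))) (2 * exp (I * β) / (ζ + 1) ^ 2) ζ := by
  refine ((((hasDerivAt_id ζ).sub_const 1).div ((hasDerivAt_id ζ).add_const 1) hζ).const_mul
    (exp (I * β))).congr_deriv ?_
  simp only [id]
  ring

lemma hasFDerivAt_horoChart (β : ℝ) (w : ℂ) :
    HasFDerivAt (horoChart β)
      ((2 * exp (I * β) / (toHalfPlane w + 1) ^ 2) • toHalfPlaneDeriv w) w :=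
  (hasDerivAt_rotCayley β (toHalfPlane_add_one_ne_zero w)).comp_hasFDerivAt w
    (hasFDerivAt_toHalfPlane w)

lemma continuous_horoChart (β : ℝ) : Continuous (horoChart β) :=
  continuous_iff_continuousAt.mpr fun w => (hasFDerivAt_horoChart β w).continuousAt

/-- `‖boundaryGap β z‖ = ‖e^{iβ} - z‖`, the distance to the common ideal endpoint `e^{iβ}` of
the geodesics `γ_{β,a}`. -/
def boundaryGap (β : ℝ) (z : ℂ) : ℂ := 1 - exp (-(I * β)) * z

def poissonKernel (β : ℝ) (z : ℂ) : ℝ := (1 - ‖z‖ ^ 2) / ‖boundaryGap β z‖ ^ 2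

def velocity (β : ℝ) (z : ℂ) : ℂ :=
  -(((1 - ‖z‖ ^ 2) / 2 : ℝ) : ℂ) * exp (I * β) * boundaryGap β z / conj (boundaryGap β z)

lemma norm_exp_neg_I_mul (β : ℝ) : ‖exp (-(I * β))‖ = 1 := by
  simp [Complex.norm_exp]

lemma one_sub_sq_norm_eq (β : ℝ) (z : ℂ) :
    1 - ‖z‖ ^ 2 = 2 * (boundaryGap β z).re - ‖boundaryGap β z‖ ^ 2 := by
  have hu : ‖exp (-(I * β)) * z‖ = ‖z‖ := by rw [norm_mul, norm_exp_neg_I_mul, one_mul]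
  rw [← hu, boundaryGap]
  simp only [Complex.sq_norm, normSq_apply, sub_re, sub_im, one_re, one_im]
  ring

lemma boundaryGap_mem_slitPlane (β : ℝ) {z : ℂ} (hz : ‖z‖ < 1) :
    boundaryGap β z ∈ slitPlane := by
  rw [boundaryGap, sub_eq_add_neg]
  apply mem_slitPlane_of_norm_lt_one
  rwa [norm_neg, norm_mul, norm_exp_neg_I_mul, one_mul]

lemma poissonKernel_pos (β : ℝ) {z : ℂ} (hz : ‖z‖ < 1) : 0 < poissonKernel β z := by
  have := slitPlane_ne_zero (boundaryGap_mem_slitPlane β hz)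
  have : ‖z‖ ^ 2 < 1 := by nlinarith [norm_nonneg z]
  unfold poissonKernel
  positivity

lemma boundaryGap_horoChart (β : ℝ) (w : ℂ) :
    boundaryGap β (horoChart β w) = 2 / (toHalfPlane w + 1) := by
  have h := toHalfPlane_add_one_ne_zero w
  rw [boundaryGap, horoChart, ← mul_assoc, ← Complex.exp_add, neg_add_cancel, exp_zero, one_mul]
  field_simp
  ring

lemma one_sub_sq_norm_horoChart (β : ℝ) (w : ℂ) :
    1 - ‖horoChart β w‖ ^ 2 = 4 * (toHalfPlane w).re / ‖toHalfPlane w + 1‖ ^ 2 := by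
  have h : ‖toHalfPlane w + 1‖ ≠ 0 := norm_ne_zero_iff.mpr (toHalfPlane_add_one_ne_zero w)
  rw [one_sub_sq_norm_eq β, boundaryGap_horoChart, div_re, norm_div, div_pow]
  simp only [Complex.sq_norm, re_ofNat, im_ofNat, add_re, one_re]
  field_simp
  norm_num
  ring

lemma norm_horoChart_lt_one (β : ℝ) (w : ℂ) : ‖horoChart β w‖ < 1 := by
  have h := one_sub_sq_norm_horoChart β w
  have : 0 < 4 * (toHalfPlane w).re / ‖toHalfPlane w + 1‖ ^ 2 := by
    have := norm_ne_zero_iff.mpr (toHalfPlane_add_one_ne_zero w)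
    rw [toHalfPlane_re]
    positivity
  nlinarith [norm_nonneg (horoChart β w)]

lemma poissonKernel_horoChart (β : ℝ) (w : ℂ) :
    poissonKernel β (horoChart β w) = (toHalfPlane w).re := by
  have h : ‖toHalfPlane w + 1‖ ≠ 0 := norm_ne_zero_iff.mpr (toHalfPlane_add_one_ne_zero w)
  rw [poissonKernel, one_sub_sq_norm_horoChart, boundaryGap_horoChart, norm_div]
  field_simp
  norm_num

lemma velocity_horoChart (β : ℝ) (w : ℂ) :
    velocity β (horoChart β w) =
      -2 * (toHalfPlane w).re * exp (I * β) / (toHalfPlane w + 1) ^ 2 := by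
  have h := toHalfPlane_add_one_ne_zero w
  have hc : conj (toHalfPlane w + 1) ≠ 0 := (map_ne_zero _).mpr h
  rw [velocity, one_sub_sq_norm_horoChart, boundaryGap_horoChart, map_div₀, map_ofNat]
  push_cast
  rw [← mul_conj']
  field_simp
  ring

lemma hasDerivAt_γH (β a t : ℝ) : HasDerivAt (γH β a) (velocity β (γH β a t)) t := by
  have hpath : HasDerivAt (fun s : ℝ => toHalfPlane (a + s * I)) (-Real.exp (-t) : ℝ) t := by
    have h := (((Real.hasDerivAt_exp (-t)).comp t (hasDerivAt_neg t)).ofReal_comp).sub_const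
      ((a : ℂ) * I)
    refine (h.congr_deriv (by simp)).congr_of_eventuallyEq (.of_forall fun s => ?_)
    simp [toHalfPlane, -Complex.ofReal_exp]
  have h := (hasDerivAt_rotCayley β (toHalfPlane_add_one_ne_zero (a + t * I))).comp t hpath
  have hfun : γH β a = fun s : ℝ => horoChart β (a + s * I) := funext (γH_eq_horoChart β a)
  rw [hfun, velocity_horoChart]
  refine h.congr_deriv ?_
  simp only [ofReal_neg, ofReal_exp, mul_neg, toHalfPlane_re, add_im, ofReal_im, mul_im,
    ofReal_re, I_im, mul_one, I_re, mul_zero, add_zero, zero_add, neg_mul]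
  ring

def horoChartInv (β : ℝ) (z : ℂ) : ℂ := ofHalfPlane (2 / boundaryGap β z - 1)

lemma horoChartInv_horoChart (β : ℝ) (w : ℂ) : horoChartInv β (horoChart β w) = w := by
  rw [horoChartInv, boundaryGap_horoChart, div_div_cancel₀ two_ne_zero, add_sub_cancel_right,
    ofHalfPlane_toHalfPlane]

lemma re_two_div_boundaryGap_sub_one (β : ℝ) {z : ℂ} (hq : boundaryGap β z ≠ 0) :
    (2 / boundaryGap β z - 1).re = poissonKernel β z := by
  have hn : normSq (boundaryGap β z) ≠ 0 := normSq_eq_zero.not.mpr hq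
  rw [poissonKernel, one_sub_sq_norm_eq β, Complex.sq_norm, sub_re, div_re]
  simp only [re_ofNat, im_ofNat, one_re]
  field_simp
  ring

lemma horoChart_horoChartInv (β : ℝ) {z : ℂ} (hz : ‖z‖ < 1) :
    horoChart β (horoChartInv β z) = z := by
  have hq := slitPlane_ne_zero (boundaryGap_mem_slitPlane β hz)
  have hpos : 0 < (2 / boundaryGap β z - 1).re :=
    re_two_div_boundaryGap_sub_one β hq ▸ poissonKernel_pos β hz
  have hζ : (2 / boundaryGap β z - 1 - 1) / (2 / boundaryGap β z) = 1 - boundaryGap β z := by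
    field_simp
    ring
  rw [horoChartInv, horoChart, toHalfPlane_ofHalfPlane hpos, sub_add_cancel, hζ, boundaryGap,
    sub_sub_cancel, ← mul_assoc, ← exp_add, add_neg_cancel, exp_zero, one_mul]

lemma image_horoChart (β : ℝ) : horoChart β '' Set.univ = Metric.ball 0 1 := by
  ext z
  constructor
  · rintro ⟨w, -, rfl⟩
    simpa using norm_horoChart_lt_one β w
  · intro hz
    exact ⟨horoChartInv β z, Set.mem_univ _, horoChart_horoChartInv β (mem_ball_zero_iff.mp hz)⟩

lemma continuousOn_ofHalfPlane : ContinuousOn ofHalfPlane {ζ | 0 < ζ.re} := by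
  have hlog : ContinuousOn (fun ζ : ℂ => Real.log ζ.re) {ζ | 0 < ζ.re} :=
    Real.continuousOn_log.comp continuous_re.continuousOn fun ζ hζ => ne_of_gt hζ
  unfold ofHalfPlane
  fun_prop

lemma continuousOn_horoChartInv (β : ℝ) : ContinuousOn (horoChartInv β) (Metric.ball 0 1) := by
  have hq : ∀ z ∈ Metric.ball (0 : ℂ) 1, boundaryGap β z ≠ 0 := fun z hz =>
    slitPlane_ne_zero (boundaryGap_mem_slitPlane β (mem_ball_zero_iff.mp hz))
  refine continuousOn_ofHalfPlane.comp (f := fun z => 2 / boundaryGap β z - 1) ?_ fun z hz => ?_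
  · unfold boundaryGap at hq ⊢
    fun_prop (disch := assumption)
  · change 0 < (2 / boundaryGap β z - 1).re
    rw [re_two_div_boundaryGap_sub_one β (hq z hz)]
    exact poissonKernel_pos β (mem_ball_zero_iff.mp hz)

lemma det_eq_re_mul_im_sub_re_mul_im (L : ℂ →L[ℝ] ℂ) :
    L.det = (L 1).re * (L I).im - (L I).re * (L 1).im := by
  rw [ContinuousLinearMap.det, ← LinearMap.det_toMatrix basisOneI, Matrix.det_fin_two]
  simp [LinearMap.toMatrix_apply]

lemma det_smul_eq_sq_norm_mul_det (c : ℂ) (L : ℂ →L[ℝ] ℂ) : (c • L).det = ‖c‖ ^ 2 * L.det := by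
  simp only [det_eq_re_mul_im_sub_re_mul_im, smul_apply, smul_eq_mul, mul_re,
    mul_im, Complex.sq_norm, normSq_apply]
  ring

lemma det_toHalfPlaneDeriv (w : ℂ) : (toHalfPlaneDeriv w).det = -Real.exp (-w.im) := by
  rw [det_eq_re_mul_im_sub_re_mul_im]
  simp [toHalfPlaneDeriv, -Complex.ofReal_exp]

lemma abs_det_fderiv_horoChart (β : ℝ) (w : ℂ) :
    |(fderiv ℝ (horoChart β) w).det| =
      ((1 - ‖horoChart β w‖ ^ 2) / 2) ^ 2 / poissonKernel β (horoChart β w) := by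
  have h := toHalfPlane_add_one_ne_zero w
  set c := 2 * exp (I * β) / (toHalfPlane w + 1) ^ 2
  have hc : ‖c‖ = 2 / ‖toHalfPlane w + 1‖ ^ 2 := by
    simp [c, norm_exp_I_mul_ofReal]
  rw [(hasFDerivAt_horoChart β w).fderiv, det_smul_eq_sq_norm_mul_det, det_toHalfPlaneDeriv,
    one_sub_sq_norm_horoChart, poissonKernel_horoChart, mul_neg, abs_neg,
    abs_of_nonneg (by positivity), hc, toHalfPlane_re]
  have := norm_ne_zero_iff.mpr h
  field_simp
  ring

lemma continuousOn_velocity :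
    ContinuousOn (fun p : ℝ × ℂ => velocity p.1 p.2) (Set.univ ×ˢ Metric.ball 0 1) := by
  have hq : ∀ p ∈ Set.univ ×ˢ Metric.ball (0 : ℂ) 1, conj (boundaryGap p.1 p.2) ≠ 0 :=
    fun p hp => (map_ne_zero _).mpr <|
      slitPlane_ne_zero (boundaryGap_mem_slitPlane p.1 (mem_ball_zero_iff.mp hp.2))
  have := continuous_ofReal
  unfold velocity boundaryGap at *
  fun_prop (disch := first | assumption | norm_num)

lemma continuousOn_poissonKernel :
    ContinuousOn (fun p : ℝ × ℂ => poissonKernel p.1 p.2) (Set.univ ×ˢ Metric.ball 0 1) := by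
  have hq : ∀ p ∈ Set.univ ×ˢ Metric.ball (0 : ℂ) 1, ‖boundaryGap p.1 p.2‖ ^ 2 ≠ 0 :=
    fun p hp => pow_ne_zero 2 <| norm_ne_zero_iff.mpr <|
      slitPlane_ne_zero (boundaryGap_mem_slitPlane p.1 (mem_ball_zero_iff.mp hp.2))
  unfold poissonKernel boundaryGap at *
  fun_prop (disch := assumption)

lemma integral_integral_add_mul_I {E : Type*} [NormedAddCommGroup E] [NormedSpace ℝ E]
    {F : ℂ → E} (hF : Integrable F) : ∫ a : ℝ, ∫ t : ℝ, F (a + t * I) = ∫ w, F w := by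
  have e := volume_preserving_equiv_real_prod.symm
  have hF' := (e.integrable_comp_emb measurableEquivRealProd.symm.measurableEmbedding).mpr hF
  rw [← e.integral_comp measurableEquivRealProd.symm.measurableEmbedding, Measure.volume_eq_prod,
    integral_prod _ (Measure.volume_eq_prod ℝ ℝ ▸ hF')]
  congr! with a t
  apply Complex.ext <;> simp

lemma integral_ball_eq_integral_horoChart (β : ℝ) (g : ℂ → ℝ) :
    ∫ z in Metric.ball 0 1, (2 / (1 - ‖z‖ ^ 2)) ^ 2 * poissonKernel β z * g z =
      ∫ w, g (horoChart β w) := by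
  have hderiv (w : ℂ) : HasFDerivAt (horoChart β) (fderiv ℝ (horoChart β) w) w :=
    (hasFDerivAt_horoChart β w).differentiableAt.hasFDerivAt
  rw [← image_horoChart β, integral_image_eq_integral_abs_det_fderiv_smul volume
    MeasurableSet.univ (fun w _ => (hderiv w).hasFDerivWithinAt)
    (Function.LeftInverse.injective (horoChartInv_horoChart β)).injOn, setIntegral_univ]
  refine integral_congr_ae (.of_forall fun w => ?_)
  have hz := norm_horoChart_lt_one β w
  have hP := poissonKernel_pos β hz
  have : 1 - ‖horoChart β w‖ ^ 2 ≠ 0 := by nlinarith [norm_nonneg (horoChart β w)]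
  simp only [abs_det_fderiv_horoChart, smul_eq_mul]
  field_simp

lemma div_conj_eq_exp_arg {q : ℂ} (hq : q ≠ 0) : q / conj q = exp (2 * arg q * I) := by
  have h := norm_mul_exp_arg_mul_I q
  have hc : conj q = ‖q‖ * exp (-(arg q * I)) := by
    conv_lhs => rw [← h]
    rw [map_mul, conj_ofReal, ← exp_conj, map_mul, conj_ofReal, conj_I, mul_neg]
  have hn : (‖q‖ : ℂ) ≠ 0 := ofReal_ne_zero.mpr (norm_ne_zero_iff.mpr hq)
  nth_rewrite 1 [← h]
  rw [hc, mul_div_mul_left _ _ hn, ← exp_sub]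
  ring_nf

/-- For `‖z‖ < 1`, `boundaryGap β z` stays in the slit plane, so `arg` never jumps and
`angle z` is a smooth lift of the direction of `velocity β z` (see `velocity_eq_exp_angle`). -/
def angle (z : ℂ) (β : ℝ) : ℝ := β + π + 2 * arg (boundaryGap β z)

lemma velocity_eq_exp_angle {z : ℂ} (hz : ‖z‖ < 1) (β : ℝ) :
    velocity β z = (((1 - ‖z‖ ^ 2) / 2 : ℝ) : ℂ) * exp (I * angle z β) := by
  have hq := slitPlane_ne_zero (boundaryGap_mem_slitPlane β hz)
  have h : exp (I * angle z β) =
      -(exp (I * β) * (boundaryGap β z / conj (boundaryGap β z))) := by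
    rw [div_conj_eq_exp_arg hq, angle]
    push_cast
    rw [show I * (β + π + 2 * arg (boundaryGap β z)) =
      I * β + π * I + 2 * arg (boundaryGap β z) * I by ring, exp_add, exp_add, exp_pi_mul_I]
    ring
  rw [velocity, h]
  ring

lemma hasDerivAt_angle {z : ℂ} (hz : ‖z‖ < 1) (β : ℝ) :
    HasDerivAt (angle z) (poissonKernel β z) β := by
  have hq : HasDerivAt (fun β : ℝ => boundaryGap β z) (I * (1 - boundaryGap β z)) β := by
    refine (((((hasDerivAt_id β).ofReal_comp).const_mul I).neg.cexp.mul_const z).const_sub 1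
      ).congr_deriv ?_
    simp only [id_eq, Pi.neg_apply, ofReal_one, mul_one, mul_neg, neg_mul, neg_neg, boundaryGap,
      sub_sub_cancel]
    ring
  have harg : HasDerivAt (fun β : ℝ => arg (boundaryGap β z))
      (I * (1 - boundaryGap β z) / boundaryGap β z).im β := by
    simpa only [Function.comp_def, imCLM_apply, log_im] using
      imCLM.hasFDerivAt.comp_hasDerivAt β (hq.clog_real (boundaryGap_mem_slitPlane β hz))
  refine (((hasDerivAt_id β).add_const π).add (harg.const_mul 2)).congr_deriv ?_
  have hn := normSq_eq_zero.not.mpr (slitPlane_ne_zero (boundaryGap_mem_slitPlane β hz))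
  rw [poissonKernel, one_sub_sq_norm_eq β, Complex.sq_norm]
  simp only [div_im, mul_re, mul_im, I_re, I_im, sub_re, sub_im, one_re, one_im]
  field_simp
  rw [normSq_apply]
  ring

lemma angle_add_two_pi (z : ℂ) (β : ℝ) : angle z (β + 2 * π) = angle z β + 2 * π := by
  have h : boundaryGap (β + 2 * π) z = boundaryGap β z := by
    rw [boundaryGap, boundaryGap, ← exp_periodic.sub_eq (-(I * β))]
    push_cast
    ring_nf
  rw [angle, angle, h]
  ring

lemma integral_deriv_mul_comp_of_periodic {φ p h : ℝ → ℝ} {T : ℝ}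
    (hφ : ∀ x, HasDerivAt φ (p x) x) (hp : Continuous p) (hh : Continuous h)
    (hper : Function.Periodic h T) (hφT : φ T = φ 0 + T) :
    ∫ x in 0..T, p x * h (φ x) = ∫ x in 0..T, h x := by
  have := intervalIntegral.integral_deriv_smul_comp (a := 0) (b := T) (fun x _ => hφ x)
    hp.continuousOn hh
  simp only [smul_eq_mul, Function.comp_apply] at this
  rw [this, hφT, hper.intervalIntegral_add_eq (φ 0) 0, zero_add]

def santaloIntegrand (f : ℂ × ℂ → ℝ) (β : ℝ) (z : ℂ) : ℝ :=
  (2 / (1 - ‖z‖ ^ 2)) ^ 2 * poissonKernel β z * f (z, velocity β z)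

section

variable {f : ℂ × ℂ → ℝ} {K : Set ℂ}

lemma integral_integral_γH_eq_integral_ball (hf : Continuous f) (hK : IsCompact K)
    (hK1 : K ⊆ Metric.ball 0 1) (hsupp : Function.support f ⊆ K ×ˢ Set.univ) (β : ℝ) :
    ∫ a : ℝ, ∫ t : ℝ, f (γH β a t, deriv (γH β a) t) =
      ∫ z in Metric.ball 0 1, santaloIntegrand f β z := by
  set F : ℂ → ℝ := fun w => f (horoChart β w, velocity β (horoChart β w))
  have hv : Continuous fun w => velocity β (horoChart β w) :=
    continuousOn_velocity.comp_continuous (f := fun w => (β, horoChart β w))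
      (continuous_const.prodMk (continuous_horoChart β))
      fun w => ⟨trivial, mem_ball_zero_iff.mpr (norm_horoChart_lt_one β w)⟩
  have hFcont : Continuous F := hf.comp ((continuous_horoChart β).prodMk hv)
  have hFsupp : HasCompactSupport F :=
    .intro (hK.image_of_continuousOn ((continuousOn_horoChartInv β).mono hK1)) fun w hw =>
      by_contra fun hne => hw ⟨horoChart β w, (hsupp hne).1, horoChartInv_horoChart β w⟩
  calc _ = ∫ a : ℝ, ∫ t : ℝ, F (a + t * I) := by
        simp_rw [(hasDerivAt_γH β _ _).deriv, γH_eq_horoChart, F]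
    _ = ∫ w, F w := integral_integral_add_mul_I (hFcont.integrable_of_hasCompactSupport hFsupp)
    _ = _ := (integral_ball_eq_integral_horoChart β fun z => f (z, velocity β z)).symm

lemma continuous_santaloIntegrand (hf : Continuous f) (hK : IsCompact K)
    (hK1 : K ⊆ Metric.ball 0 1) (hsupp : Function.support f ⊆ K ×ˢ Set.univ) :
    Continuous (Function.uncurry (santaloIntegrand f)) := by
  have hsub : Function.support (Function.uncurry (santaloIntegrand f)) ⊆ Set.univ ×ˢ K :=
    fun p hp => ⟨trivial, (hsupp (right_ne_zero_of_mul hp)).1⟩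
  refine ContinuousOn.continuous_of_tsupport_subset ?_ (isOpen_univ.prod Metric.isOpen_ball)
    ((closure_minimal hsub (isClosed_univ.prod hK.isClosed)).trans
      (Set.prod_mono subset_rfl hK1))
  have hc : ∀ p ∈ Set.univ ×ˢ Metric.ball (0 : ℂ) 1, 1 - ‖(p : ℝ × ℂ).2‖ ^ 2 ≠ 0 :=
    fun p hp => by nlinarith [mem_ball_zero_iff.mp hp.2, norm_nonneg p.2]
  have h1 : ContinuousOn (fun p : ℝ × ℂ => (2 / (1 - ‖p.2‖ ^ 2)) ^ 2)
      (Set.univ ×ˢ Metric.ball 0 1) := by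
    fun_prop (disch := assumption)
  exact (h1.mul continuousOn_poissonKernel).mul
    (hf.comp_continuousOn (continuous_snd.continuousOn.prodMk continuousOn_velocity))

lemma integral_santaloIntegrand_eq_integral_angle (hf : Continuous f) {z : ℂ} (hz : ‖z‖ < 1) :
    ∫ β in 0..2 * π, santaloIntegrand f β z =
      (2 / (1 - ‖z‖ ^ 2)) ^ 2 *
        ∫ θ in 0..2 * π, f (z, (((1 - ‖z‖ ^ 2) / 2 : ℝ) : ℂ) * exp (I * θ)) := by
  have hP : Continuous fun β => poissonKernel β z :=
    continuousOn_poissonKernel.comp_continuous (f := fun β => (β, z))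
      (continuous_id.prodMk continuous_const) fun _ => ⟨trivial, mem_ball_zero_iff.mpr hz⟩
  have hper : Function.Periodic
      (fun θ : ℝ => f (z, (((1 - ‖z‖ ^ 2) / 2 : ℝ) : ℂ) * exp (I * θ))) (2 * π) := fun θ => by
    simp only
    rw [← exp_periodic (I * θ)]
    push_cast
    ring_nf
  simp_rw [santaloIntegrand, mul_assoc, velocity_eq_exp_angle hz]
  rw [intervalIntegral.integral_const_mul]
  congr 1
  exact integral_deriv_mul_comp_of_periodic (hasDerivAt_angle hz) hP (by fun_prop) hper
    (by rw [← zero_add (2 * π), angle_add_two_pi, zero_add])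

end

end Horocyclic

open Horocyclic

/-- Santaló's formula in horocyclic coordinates: for every continuous `f : ℂ × ℂ → ℝ`
supported in `K × ℂ` with `K` compact inside the open unit disk,
`∫₀^{2π} ∫_ℝ ∫_ℝ f(γ_{β,a}(t), γ′_{β,a}(t)) dt da dβ
 = ∫_{|z|<1} (2/(1−|z|²))² ∫₀^{2π} f(z, ((1−|z|²)/2)·e^{iθ}) dθ dλ(z)`. -/
theorem santalo_horocyclic (f : ℂ × ℂ → ℝ) (hf : Continuous f)
    (K : Set ℂ) (hK : IsCompact K) (hK1 : K ⊆ Metric.ball 0 1)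
    (hsupp : Function.support f ⊆ K ×ˢ (Set.univ : Set ℂ)) :
    (∫ β in (0 : ℝ)..(2 * Real.pi), ∫ a : ℝ, ∫ t : ℝ,
        f (γH β a t, deriv (γH β a) t)) =
      ∫ z in Metric.ball (0 : ℂ) 1,
        (2 / (1 - ‖z‖ ^ 2)) ^ 2 *
          ∫ θ in (0 : ℝ)..(2 * Real.pi),
            f (z, (((1 - ‖z‖ ^ 2) / 2 : ℝ) : ℂ) *
              Complex.exp (Complex.I * (θ : ℂ))) := by
  have hint : Integrable (Function.uncurry (santaloIntegrand f))
      ((volume.restrict (Set.Ioc 0 (2 * π))).prod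
        (volume.restrict (Metric.ball (0 : ℂ) 1))) := by
    rw [Measure.prod_restrict, ← Measure.volume_eq_prod]
    exact ((continuous_santaloIntegrand hf hK hK1 hsupp).continuousOn.integrableOn_compact
      (isCompact_Icc.prod (isCompact_closedBall 0 1))).mono_set
      (Set.prod_mono Set.Ioc_subset_Icc_self Metric.ball_subset_closedBall)
  calc _ = ∫ β in 0..2 * π, ∫ z in Metric.ball 0 1, santaloIntegrand f β z :=
        intervalIntegral.integral_congr fun β _ =>
          integral_integral_γH_eq_integral_ball hf hK hK1 hsupp β
    _ = ∫ z in Metric.ball 0 1, ∫ β in 0..2 * π, santaloIntegrand f β z := by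
        simp_rw [intervalIntegral.integral_of_le Real.two_pi_pos.le]
        exact integral_integral_swap hint
    _ = _ := setIntegral_congr_fun measurableSet_ball fun z hz =>
        integral_santaloIntegrand_eq_integral_angle hf (mem_ball_zero_iff.mp hz)
end
end

section
/- Weighted Euclidean X-ray transform factorization: fix γ > −1. For every continuous function f : ℂ → ℝ on the closed unit disk, every β ∈ ℝ, and every α ∈ (−π/2, π/2): (i) d(γ^E_{β,α}(u)) = cos²α − u² for all u ∈ ℝ; and (ii) ∫_{−cos α}^{cos α} (cos²α − u²)^γ · f(γ^E_{β,α}(u)) du = (cos α)^{2γ+1} · ∫_{−1}^{1} (1 − t²)^γ · f( e^{i(β+π+α)}·(t·cos α + i·sin α) ) dt; in particular I₀^E d^γ f (β,α) = μ^{2γ+1}(β,α) times a quantity extending smoothly across α = ±π/2. -/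
/-! The rotation `e^{i(β+α+π)}` has modulus one, so `|γ^E_{β,α}(u)|² = u² + sin²α` and
`d = cos²α − u²`. Substituting `u = t cos α` maps the chord to `[-1, 1]` and factors the weight as
`cos^{2γ}α · (1 − t²)^γ`; the Jacobian contributes the last power of `cos α`. -/

open MeasureTheory

noncomputable section

/-- Fan-beam parameterization of Euclidean chords of the unit disk:
`γ^E_{β,α}(u) = e^{i(β+α+π)}·(u + i·sin α)`. -/
def γE (β α u : ℝ) : ℂ :=
  Complex.exp (Complex.I * ((β + α + Real.pi : ℝ) : ℂ)) *
    ((u : ℂ) + Complex.I * ((Real.sin α : ℝ) : ℂ))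

/-- `d(z) = 1 − |z|²`. -/
def dE (z : ℂ) : ℝ := 1 - ‖z‖ ^ 2

lemma dE_γE (β α u : ℝ) : dE (γE β α u) = Real.cos α ^ 2 - u ^ 2 := by
  have h_rot : ‖Complex.exp (Complex.I * ((β + α + Real.pi : ℝ) : ℂ))‖ = 1 := by
    rw [mul_comm, Complex.norm_exp_ofReal_mul_I]
  have h_chord : ‖(u : ℂ) + Complex.I * ((Real.sin α : ℝ) : ℂ)‖ ^ 2 = u ^ 2 + Real.sin α ^ 2 := by
    rw [Complex.sq_norm, Complex.normSq_apply]
    simp [sq, Complex.sin_ofReal_re]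
  rw [dE, γE, norm_mul, h_rot, one_mul, h_chord, ← Real.cos_sq_add_sin_sq α]
  ring

lemma sq_sub_mul_sq_rpow {c t : ℝ} (hc : 0 ≤ c) (ht : t ∈ Set.Icc (-1 : ℝ) 1) (γ : ℝ) :
    (c ^ 2 - (t * c) ^ 2) ^ γ = c ^ (2 * γ) * (1 - t ^ 2) ^ γ := by
  have h_weight : 0 ≤ 1 - t ^ 2 := by nlinarith [ht.1, ht.2]
  rw [show c ^ 2 - (t * c) ^ 2 = c ^ 2 * (1 - t ^ 2) by ring,
    Real.mul_rpow (sq_nonneg c) h_weight, ← Real.rpow_natCast, ← Real.rpow_mul hc]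
  norm_num [mul_comm]

theorem integral_sq_sub_sq_rpow_smul {E : Type*} [NormedAddCommGroup E] [NormedSpace ℝ E]
    {c : ℝ} (hc : 0 < c) (γ : ℝ) (g : ℝ → E) :
    ∫ u in -c..c, (c ^ 2 - u ^ 2) ^ γ • g u =
      c ^ (2 * γ + 1) • ∫ t in (-1 : ℝ)..1, (1 - t ^ 2) ^ γ • g (t * c) := by
  have h_subst := intervalIntegral.integral_comp_mul_right
    (fun u => (c ^ 2 - u ^ 2) ^ γ • g u) hc.ne' (a := -1) (b := 1)
  simp only [neg_one_mul, one_mul] at h_subst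
  calc ∫ u in -c..c, (c ^ 2 - u ^ 2) ^ γ • g u
      = c • ∫ t in (-1 : ℝ)..1, (c ^ 2 - (t * c) ^ 2) ^ γ • g (t * c) := by
        rw [h_subst, smul_inv_smul₀ hc.ne']
    _ = c • ∫ t in (-1 : ℝ)..1, c ^ (2 * γ) • (1 - t ^ 2) ^ γ • g (t * c) := by
        congr 1
        refine intervalIntegral.integral_congr fun t ht => ?_
        rw [Set.uIcc_of_le (by norm_num)] at ht
        simp only [sq_sub_mul_sq_rpow hc.le ht, smul_smul]
    _ = c ^ (2 * γ + 1) • ∫ t in (-1 : ℝ)..1, (1 - t ^ 2) ^ γ • g (t * c) := by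
        rw [intervalIntegral.integral_smul, smul_smul, Real.rpow_add_one hc.ne', mul_comm]

theorem euclidean_xray_factorization_general (γ : ℝ) (f : ℂ → ℝ)
    (β α : ℝ) (hα : α ∈ Set.Ioo (-(Real.pi / 2)) (Real.pi / 2)) :
    (∀ u : ℝ, dE (γE β α u) = Real.cos α ^ 2 - u ^ 2) ∧
    (∫ u in (-(Real.cos α))..(Real.cos α),
        (Real.cos α ^ 2 - u ^ 2) ^ γ * f (γE β α u)) =
      Real.cos α ^ (2 * γ + 1) *
        ∫ t in (-1 : ℝ)..1,
          (1 - t ^ 2) ^ γ *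
            f (Complex.exp (Complex.I * ((β + Real.pi + α : ℝ) : ℂ)) *
              (((t * Real.cos α : ℝ) : ℂ) + Complex.I * ((Real.sin α : ℝ) : ℂ))) := by
  refine ⟨dE_γE β α, ?_⟩
  have h_angle : β + Real.pi + α = β + α + Real.pi := add_right_comm _ _ _
  simpa only [smul_eq_mul, γE, h_angle] using
    integral_sq_sub_sq_rpow_smul (Real.cos_pos_of_mem_Ioo hα) γ (fun u => f (γE β α u))

/-- Weighted Euclidean X-ray transform factorization: for `γ > −1`, continuous `f`, and
`α ∈ (−π/2, π/2)`: (i) `d(γ^E_{β,α}(u)) = cos²α − u²`; and (ii)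
`∫_{−cos α}^{cos α} (cos²α − u²)^γ f(γ^E_{β,α}(u)) du
 = (cos α)^{2γ+1} ∫_{−1}^{1} (1 − t²)^γ f(e^{i(β+π+α)}(t·cos α + i·sin α)) dt`. -/
theorem euclidean_xray_factorization (γ : ℝ) (hγ : -1 < γ) (f : ℂ → ℝ) (hf : Continuous f)
    (β α : ℝ) (hα : α ∈ Set.Ioo (-(Real.pi / 2)) (Real.pi / 2)) :
    (∀ u : ℝ, dE (γE β α u) = Real.cos α ^ 2 - u ^ 2) ∧
    (∫ u in (-(Real.cos α))..(Real.cos α),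
        (Real.cos α ^ 2 - u ^ 2) ^ γ * f (γE β α u)) =
      Real.cos α ^ (2 * γ + 1) *
        ∫ t in (-1 : ℝ)..1,
          (1 - t ^ 2) ^ γ *
            f (Complex.exp (Complex.I * ((β + Real.pi + α : ℝ) : ℂ)) *
              (((t * Real.cos α : ℝ) : ℂ) + Complex.I * ((Real.sin α : ℝ) : ℂ))) :=
  euclidean_xray_factorization_general γ f β α hα
end
end
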